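/- arXiv:2106.11425 — 2 statements merged into one kernel-verified Lean document; each statement's English description precedes it below -/
import Mathlib

section
/- Let K ≥ 1, c ≥ 1, T > 0 and let F : ℝ^d → ℝ^d be continuously differentiable satisfying both (i) the one-sided Lipschitz condition ⟨x − y, F(x) − F(y)⟩ ≤ K‖x − y‖² for all x, y, and (ii) ‖DF(x)‖ ≤ K(1 + ‖x‖^c) for all x. Let N ≥ 1 be a natural number and h = T/N. Then for every y ∈ ℝ^d with 1 ≤ ‖y‖ ≤ N^{1/(2c)}, the tamed Euler increment satisfies ‖y + h·F̃_h(y)‖² ≤ ‖y‖²·(1 + (2/N)·((2TK + T‖F(0)‖)² + TK + T‖F(0)‖)). -/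
open scoped RealInnerProductSpace

/-- The tamed drift `F̃_h(x) = F(x) / (1 + h‖F(x)‖)`. -/
noncomputable def tamedDrift {d : ℕ} (F : EuclideanSpace ℝ (Fin d) → EuclideanSpace ℝ (Fin d))
    (h : ℝ) (x : EuclideanSpace ℝ (Fin d)) : EuclideanSpace ℝ (Fin d) :=
  (1 + h * ‖F x‖)⁻¹ • F x

/-!
Write `r = ‖y‖` and `u = F y`. The one-sided Lipschitz condition against `0` gives
`⟪y, u⟫ ≤ (K + ‖F 0‖) r²`, and the mean value inequality with the derivative bound gives
`‖u‖ ≤ (2K + ‖F 0‖) r^c r`. Since the taming factor lies in `(0, 1]`, expanding the square yields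
`‖y + h F̃_h(y)‖² ≤ r² + 2h max(⟪y, u⟫, 0) + (h‖u‖)²`, and the restriction `r ≤ N^{1/(2c)}` turns
`r^{2c}` into at most `N`, so `(h‖u‖)² ≤ T² (2K + ‖F 0‖)² r² / N`.
-/

lemma rpow_sq_le_of_le_rpow_one_div_two_mul {r c N : ℝ} (hr : 0 ≤ r) (hc : 0 < c) (hN : 0 ≤ N)
    (hrN : r ≤ N ^ (1 / (2 * c))) : (r ^ c) ^ 2 ≤ N := by
  have h2c : 0 < 2 * c := by positivity
  calc (r ^ c) ^ 2 = r ^ (2 * c) := by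
        rw [← Real.rpow_natCast, ← Real.rpow_mul hr, mul_comm]; norm_num
    _ ≤ (N ^ (2 * c)⁻¹) ^ (2 * c) := by
        rw [← one_div]; exact Real.rpow_le_rpow hr hrN h2c.le
    _ = N := Real.rpow_inv_rpow hN h2c.ne'

section Growth

variable {E G : Type*} [NormedAddCommGroup E] [NormedSpace ℝ E]
  [NormedAddCommGroup G] [NormedSpace ℝ G]

lemma nonneg_of_norm_fderiv_le {F : E → G} {K c : ℝ}
    (hDF : ∀ x, ‖fderiv ℝ F x‖ ≤ K * (1 + ‖x‖ ^ c)) : 0 ≤ K :=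
  nonneg_of_mul_nonneg_left ((norm_nonneg _).trans (hDF 0)) (by positivity)

lemma norm_sub_apply_zero_le_of_norm_fderiv_le {F : E → G} (hF : Differentiable ℝ F)
    {K c : ℝ} (hc : 0 ≤ c) (hDF : ∀ x, ‖fderiv ℝ F x‖ ≤ K * (1 + ‖x‖ ^ c)) (y : E) :
    ‖F y - F 0‖ ≤ K * (1 + ‖y‖ ^ c) * ‖y‖ := by
  have hK := nonneg_of_norm_fderiv_le hDF
  have hbound : ∀ x ∈ Metric.closedBall (0 : E) ‖y‖, ‖fderiv ℝ F x‖ ≤ K * (1 + ‖y‖ ^ c) := by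
    intro x hx
    have hxy : ‖x‖ ^ c ≤ ‖y‖ ^ c :=
      Real.rpow_le_rpow (norm_nonneg x) (mem_closedBall_zero_iff.mp hx) hc
    exact (hDF x).trans (by gcongr)
  simpa using (convex_closedBall (0 : E) ‖y‖).norm_image_sub_le_of_norm_fderiv_le
    (fun x _ => hF x) hbound (Metric.mem_closedBall_self (norm_nonneg y))
    (mem_closedBall_zero_iff.mpr le_rfl)

lemma norm_apply_le_of_norm_fderiv_le {F : E → G} (hF : Differentiable ℝ F)
    {K c : ℝ} (hc : 0 ≤ c) (hDF : ∀ x, ‖fderiv ℝ F x‖ ≤ K * (1 + ‖x‖ ^ c))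
    {y : E} (hy : 1 ≤ ‖y‖) : ‖F y‖ ≤ (2 * K + ‖F 0‖) * (‖y‖ ^ c * ‖y‖) := by
  have hK := nonneg_of_norm_fderiv_le hDF
  have hyc : 1 ≤ ‖y‖ ^ c := Real.one_le_rpow hy hc
  have hycy : 1 ≤ ‖y‖ ^ c * ‖y‖ := one_le_mul_of_one_le_of_one_le hyc hy
  calc ‖F y‖ ≤ ‖F y - F 0‖ + ‖F 0‖ := norm_le_norm_sub_add _ _
    _ ≤ K * (1 + ‖y‖ ^ c) * ‖y‖ + ‖F 0‖ * (‖y‖ ^ c * ‖y‖) := by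
        gcongr
        · exact norm_sub_apply_zero_le_of_norm_fderiv_le hF hc hDF y
        · exact le_mul_of_one_le_right (norm_nonneg _) hycy
    _ ≤ (2 * K + ‖F 0‖) * (‖y‖ ^ c * ‖y‖) := by
        nlinarith [mul_nonneg (mul_nonneg hK (norm_nonneg y)) (sub_nonneg.mpr hyc)]

end Growth

section Inner

variable {E : Type*} [NormedAddCommGroup E] [InnerProductSpace ℝ E]

lemma inner_apply_le_of_oneSidedLipschitz {F : E → E} {K : ℝ}
    (hos : ∀ x y, ⟪x - y, F x - F y⟫ ≤ K * ‖x - y‖ ^ 2) {y : E} (hy : 1 ≤ ‖y‖) :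
    ⟪y, F y⟫ ≤ (K + ‖F 0‖) * ‖y‖ ^ 2 := by
  have hlip : ⟪y, F y⟫ - ⟪y, F 0⟫ ≤ K * ‖y‖ ^ 2 := by
    simpa [inner_sub_right] using hos y 0
  have hF0 : ⟪y, F 0⟫ ≤ ‖F 0‖ * ‖y‖ ^ 2 := calc
    ⟪y, F 0⟫ ≤ ‖y‖ * ‖F 0‖ := real_inner_le_norm _ _
    _ ≤ ‖F 0‖ * ‖y‖ ^ 2 := by
        rw [mul_comm]; exact mul_le_mul_of_nonneg_left (le_self_pow₀ hy two_ne_zero) (norm_nonneg _)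
  linarith

lemma norm_add_smul_inv_smul_sq_le {y u : E} {h A : ℝ} (hh : 0 ≤ h) (hA : 0 ≤ A)
    (hyu : ⟪y, u⟫ ≤ A) :
    ‖y + h • (1 + h * ‖u‖)⁻¹ • u‖ ^ 2 ≤ ‖y‖ ^ 2 + 2 * h * A + (h * ‖u‖) ^ 2 := by
  set s := (1 + h * ‖u‖)⁻¹
  have hs0 : 0 ≤ s := by positivity
  have hs1 : s ≤ 1 := inv_le_one_of_one_le₀ (by nlinarith [norm_nonneg u])
  have hinner : s * ⟪y, u⟫ ≤ A := by
    rcases le_total ⟪y, u⟫ 0 with hsign | hsign <;> nlinarith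
  have hnorm : (h * s * ‖u‖) ^ 2 ≤ (h * ‖u‖) ^ 2 := by
    have : h * s * ‖u‖ ≤ h * ‖u‖ := by
      have := mul_le_mul_of_nonneg_left hs1 (mul_nonneg hh (norm_nonneg u))
      nlinarith
    gcongr
  rw [smul_smul, norm_add_sq_real, real_inner_smul_right, norm_smul,
    Real.norm_of_nonneg (by positivity)]
  nlinarith

end Inner

theorem tamed_euler_increment_sq_bound_general (d : ℕ) (K c T : ℝ) (hc : 1 ≤ c) (hT : 0 < T)
    (F : EuclideanSpace ℝ (Fin d) → EuclideanSpace ℝ (Fin d)) (hF : ContDiff ℝ 1 F)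
    (hos : ∀ x y, ⟪x - y, F x - F y⟫ ≤ K * ‖x - y‖ ^ 2)
    (hDF : ∀ x, ‖fderiv ℝ F x‖ ≤ K * (1 + ‖x‖ ^ c))
    (N : ℕ) (hN : 1 ≤ N) (h : ℝ) (hh : h = T / N)
    (y : EuclideanSpace ℝ (Fin d)) (hy1 : 1 ≤ ‖y‖) (hy2 : ‖y‖ ≤ (N : ℝ) ^ (1 / (2 * c))) :
    ‖y + h • tamedDrift F h y‖ ^ 2
      ≤ ‖y‖ ^ 2 * (1 + (2 / N) * ((2 * T * K + T * ‖F 0‖) ^ 2 + T * K + T * ‖F 0‖)) := by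
  have hN0 : (0 : ℝ) < N := by exact_mod_cast hN
  have hh0 : 0 ≤ h := hh ▸ (div_pos hT hN0).le
  have hc0 : 0 < c := zero_lt_one.trans_le hc
  have hK : 0 ≤ K := nonneg_of_norm_fderiv_le hDF
  set a := ‖F 0‖
  set r := ‖y‖
  have hinner : ⟪y, F y⟫ ≤ (K + a) * r ^ 2 := inner_apply_le_of_oneSidedLipschitz hos hy1
  have hgrowth : h * ‖F y‖ ≤ T / N * (2 * K + a) * (r ^ c * r) := by
    rw [hh, mul_assoc]
    gcongr
    exact norm_apply_le_of_norm_fderiv_le (hF.differentiable one_ne_zero) hc0.le hDF hy1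
  have hquad : (h * ‖F y‖) ^ 2 ≤ T ^ 2 * (2 * K + a) ^ 2 * r ^ 2 / N := calc
    (h * ‖F y‖) ^ 2 ≤ (T / N * (2 * K + a) * (r ^ c * r)) ^ 2 := by gcongr
    _ = T ^ 2 * (2 * K + a) ^ 2 * r ^ 2 * (r ^ c) ^ 2 / N ^ 2 := by ring
    _ ≤ T ^ 2 * (2 * K + a) ^ 2 * r ^ 2 * N / N ^ 2 := by
        gcongr; exact rpow_sq_le_of_le_rpow_one_div_two_mul (norm_nonneg y) hc0 hN0.le hy2
    _ = T ^ 2 * (2 * K + a) ^ 2 * r ^ 2 / N := by field_simp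
  have hstep := norm_add_smul_inv_smul_sq_le hh0 (by positivity) hinner
  have hslack : 0 ≤ T ^ 2 * (2 * K + a) ^ 2 * r ^ 2 / N := by positivity
  have hrhs : r ^ 2 * (1 + (2 / N) * ((2 * T * K + T * a) ^ 2 + T * K + T * a))
      = r ^ 2 + 2 * h * ((K + a) * r ^ 2) + 2 * (T ^ 2 * (2 * K + a) ^ 2 * r ^ 2 / N) := by
    rw [hh]; ring
  rw [hrhs]
  exact hstep.trans (by linarith)

/-- squared-norm bound on the tamed Euler increment in the intermediate regime. -/
theorem tamed_euler_increment_sq_bound (d : ℕ) (K c T : ℝ) (hK : 1 ≤ K) (hc : 1 ≤ c) (hT : 0 < T)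
    (F : EuclideanSpace ℝ (Fin d) → EuclideanSpace ℝ (Fin d)) (hF : ContDiff ℝ 1 F)
    (hos : ∀ x y, ⟪x - y, F x - F y⟫ ≤ K * ‖x - y‖ ^ 2)
    (hDF : ∀ x, ‖fderiv ℝ F x‖ ≤ K * (1 + ‖x‖ ^ c))
    (N : ℕ) (hN : 1 ≤ N) (h : ℝ) (hh : h = T / N)
    (y : EuclideanSpace ℝ (Fin d)) (hy1 : 1 ≤ ‖y‖) (hy2 : ‖y‖ ≤ (N : ℝ) ^ (1 / (2 * c))) :
    ‖y + h • tamedDrift F h y‖ ^ 2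
      ≤ ‖y‖ ^ 2 * (1 + (2 / N) * ((2 * T * K + T * ‖F 0‖) ^ 2 + T * K + T * ‖F 0‖)) :=
  tamed_euler_increment_sq_bound_general d K c T hc hT F hF hos hDF N hN h hh y hy1 hy2
end

section
/- (Finiteness of operator-norm moments of the geometric-Brownian-motion factor.) Let A, B_1, …, B_m ∈ ℝ^{d×d}, set C := A − (1/2)∑_{i=1}^m B_i², and let r ≥ 1 and τ ≥ 0. For any probability space (Ω, 𝓕, P) and any mutually independent real random variables Z_1, …, Z_m each with Gaussian law N(0, τ), one has E[‖exp(C·τ + ∑_{i=1}^m Z_i·B_i)‖^r] ≤ 2^m · exp(r‖C‖τ + (r²τ/2)·∑_{i=1}^m ‖B_i‖²); in particular this moment is finite. -/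
open MeasureTheory ProbabilityTheory
open scoped NNReal ENNReal

/-- The operator norm of a matrix, acting on Euclidean space. -/
noncomputable def matOpNorm {d : ℕ} (M : Matrix (Fin d) (Fin d) ℝ) : ℝ :=
  ‖Matrix.toEuclideanCLM (𝕜 := ℝ) M‖

/-! The integrand is at most `exp (r ‖τ C + ∑ Zᵢ Bᵢ‖)`, since `‖exp M‖ ≤ exp ‖M‖`, and the triangle
inequality splits this into `exp (r ‖C‖ τ) ∏ exp (r ‖Bᵢ‖ |Zᵢ|)`. By independence the expectation of
the product factorises, and for `Z ~ N(0, τ)` one has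
`E exp (s |Z|) ≤ E exp (s Z) + E exp (-s Z) = 2 exp (τ s² / 2)`. -/

-- Not `NormOneClass`: operators on the zero space have `‖1‖ = 0`.
theorem norm_exp_le_exp_norm_of_norm_one_le {𝔸 : Type*} [NormedRing 𝔸] [NormedAlgebra ℝ 𝔸]
    [CompleteSpace 𝔸] (h1 : ‖(1 : 𝔸)‖ ≤ 1) (x : 𝔸) :
    ‖NormedSpace.exp x‖ ≤ Real.exp ‖x‖ := by
  rw [NormedSpace.exp_eq_tsum ℝ, Real.exp_eq_exp_ℝ, NormedSpace.exp_eq_tsum ℝ]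
  refine (norm_tsum_le_tsum_norm (NormedSpace.norm_expSeries_summable' x)).trans <|
    Summable.tsum_le_tsum (fun n => ?_) (NormedSpace.norm_expSeries_summable' x)
      (NormedSpace.expSeries_summable' ‖x‖)
  rw [norm_smul, smul_eq_mul, Real.norm_of_nonneg (by positivity)]
  gcongr
  rcases n.eq_zero_or_pos with rfl | hn
  · simpa using h1
  · exact norm_pow_le' x hn

namespace Matrix

variable {n : Type*} [Fintype n] [DecidableEq n]

theorem continuous_toEuclideanCLM {𝕜 : Type*} [RCLike 𝕜] :
    Continuous (toEuclideanCLM (𝕜 := 𝕜) (n := n)) :=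
  LinearMap.continuous_of_finiteDimensional
    (toEuclideanCLM (𝕜 := 𝕜) (n := n)).toAlgEquiv.toLinearMap

theorem toEuclideanCLM_exp (M : Matrix n n ℝ) :
    toEuclideanCLM (𝕜 := ℝ) (NormedSpace.exp M) = NormedSpace.exp (toEuclideanCLM (𝕜 := ℝ) M) :=
  -- `map_exp_of_mem_ball` needs some Banach-algebra norm on matrices inducing their topology.
  let _ : NormedRing (Matrix n n ℝ) := Matrix.linftyOpNormedRing
  let _ : NormedAlgebra ℝ (Matrix n n ℝ) := Matrix.linftyOpNormedAlgebra
  NormedSpace.map_exp_of_mem_ball (𝕂 := ℝ) _ continuous_toEuclideanCLM M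
    (by simp [NormedSpace.expSeries_radius_eq_top])

end Matrix

section matOpNorm

variable {d : ℕ}

open scoped Matrix.Norms.L2Operator in
theorem matOpNorm_eq_norm (M : Matrix (Fin d) (Fin d) ℝ) : matOpNorm M = ‖M‖ := rfl

theorem matOpNorm_exp_le (M : Matrix (Fin d) (Fin d) ℝ) :
    matOpNorm (NormedSpace.exp M) ≤ Real.exp (matOpNorm M) := by
  rw [matOpNorm, Matrix.toEuclideanCLM_exp]
  exact norm_exp_le_exp_norm_of_norm_one_le ContinuousLinearMap.norm_id_le _

open scoped Matrix.Norms.L2Operator in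
theorem matOpNorm_smul_add_sum_smul_le {ι : Type*} (s : Finset ι) (a : ℝ)
    (C : Matrix (Fin d) (Fin d) ℝ) (b : ι → ℝ) (B : ι → Matrix (Fin d) (Fin d) ℝ) :
    matOpNorm (a • C + ∑ i ∈ s, b i • B i) ≤
      |a| * matOpNorm C + ∑ i ∈ s, |b i| * matOpNorm (B i) := by
  simp only [matOpNorm_eq_norm, ← Real.norm_eq_abs, ← norm_smul]
  exact (norm_add_le _ _).trans (add_le_add_right (norm_sum_le _ _) _)

theorem matOpNorm_exp_smul_add_sum_smul_rpow_le {ι : Type*} (s : Finset ι) {r : ℝ} (hr : 0 ≤ r)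
    (a : ℝ) (C : Matrix (Fin d) (Fin d) ℝ) (b : ι → ℝ) (B : ι → Matrix (Fin d) (Fin d) ℝ) :
    matOpNorm (NormedSpace.exp (a • C + ∑ i ∈ s, b i • B i)) ^ r ≤
      Real.exp (r * matOpNorm C * |a|) * ∏ i ∈ s, Real.exp (r * matOpNorm (B i) * |b i|) :=
  calc matOpNorm (NormedSpace.exp (a • C + ∑ i ∈ s, b i • B i)) ^ r
      ≤ Real.exp (matOpNorm (a • C + ∑ i ∈ s, b i • B i)) ^ r :=
        Real.rpow_le_rpow (norm_nonneg _) (matOpNorm_exp_le _) hr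
    _ ≤ Real.exp (|a| * matOpNorm C + ∑ i ∈ s, |b i| * matOpNorm (B i)) ^ r := by
        gcongr
        exact matOpNorm_smul_add_sum_smul_le s a C b B
    _ = Real.exp (r * matOpNorm C * |a|) * ∏ i ∈ s, Real.exp (r * matOpNorm (B i) * |b i|) := by
        rw [← Real.exp_mul, ← Real.exp_sum, ← Real.exp_add, add_mul, Finset.sum_mul]
        congr 2
        · ring
        · exact Finset.sum_congr rfl fun i _ => by ring

end matOpNorm

theorem Real.exp_mul_abs_le_add (t x : ℝ) :
    Real.exp (t * |x|) ≤ Real.exp (t * x) + Real.exp (-t * x) := by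
  rcases abs_choice x with h | h <;> rw [h]
  · exact le_add_of_nonneg_right (Real.exp_nonneg _)
  · rw [neg_mul_comm]
    exact le_add_of_nonneg_left (Real.exp_nonneg _)

theorem lintegral_exp_mul_gaussianReal (μ : ℝ) (v : ℝ≥0) (t : ℝ) :
    ∫⁻ x, ENNReal.ofReal (Real.exp (t * x)) ∂gaussianReal μ v =
      ENNReal.ofReal (Real.exp (μ * t + v * t ^ 2 / 2)) := by
  rw [← ofReal_integral_eq_lintegral_ofReal (integrable_exp_mul_gaussianReal t)
    (ae_of_all _ fun _ => (Real.exp_pos _).le)]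
  exact congrArg ENNReal.ofReal (congrFun mgf_fun_id_gaussianReal t)

theorem lintegral_exp_mul_abs_gaussianReal_le (v : ℝ≥0) (t : ℝ) :
    ∫⁻ x, ENNReal.ofReal (Real.exp (t * |x|)) ∂gaussianReal 0 v ≤
      ENNReal.ofReal (2 * Real.exp (v * t ^ 2 / 2)) :=
  calc ∫⁻ x, ENNReal.ofReal (Real.exp (t * |x|)) ∂gaussianReal 0 v
      ≤ ∫⁻ x, (ENNReal.ofReal (Real.exp (t * x)) + ENNReal.ofReal (Real.exp (-t * x)))
          ∂gaussianReal 0 v := by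
        gcongr with x
        rw [← ENNReal.ofReal_add (Real.exp_nonneg _) (Real.exp_nonneg _)]
        exact ENNReal.ofReal_le_ofReal (Real.exp_mul_abs_le_add t x)
    _ = ENNReal.ofReal (2 * Real.exp (v * t ^ 2 / 2)) := by
        rw [lintegral_add_left (by fun_prop), lintegral_exp_mul_gaussianReal,
          lintegral_exp_mul_gaussianReal, neg_sq, ← ENNReal.ofReal_add (by positivity) (by positivity)]
        simp only [zero_mul, zero_add, two_mul]

theorem lintegral_exp_mul_abs_le_of_map_eq_gaussianReal {Ω : Type*} [MeasurableSpace Ω]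
    {P : Measure Ω} {X : Ω → ℝ} {v : ℝ≥0} (hX : P.map X = gaussianReal 0 v) (t : ℝ) :
    ∫⁻ ω, ENNReal.ofReal (Real.exp (t * |X ω|)) ∂P ≤
      ENNReal.ofReal (2 * Real.exp (v * t ^ 2 / 2)) := by
  have hXm : AEMeasurable X P := aemeasurable_of_map_neZero (by rw [hX]; infer_instance)
  rw [← lintegral_map' (f := fun x => ENNReal.ofReal (Real.exp (t * |x|))) (by fun_prop) hXm, hX]
  exact lintegral_exp_mul_abs_gaussianReal_le v t

theorem gbm_factor_opNorm_moment_bound_general (d m : ℕ)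
    (B : Fin m → Matrix (Fin d) (Fin d) ℝ)
    (C : Matrix (Fin d) (Fin d) ℝ)
    (r : ℝ) (hr : 1 ≤ r) (τ : ℝ≥0)
    (Ω : Type) [MeasurableSpace Ω] (P : Measure Ω)
    (Z : Fin m → Ω → ℝ) (hZmeas : ∀ i, Measurable (Z i))
    (hZlaw : ∀ i, P.map (Z i) = gaussianReal 0 τ)
    (hindep : iIndepFun Z P) :
    ∫⁻ ω, ENNReal.ofReal
        (matOpNorm (NormedSpace.exp ((τ : ℝ) • C + ∑ i, Z i ω • B i)) ^ r) ∂P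
      ≤ ENNReal.ofReal (2 ^ m *
          Real.exp (r * matOpNorm C * τ + (r ^ 2 * τ / 2) * ∑ i, matOpNorm (B i) ^ 2)) := by
  set φ : Fin m → ℝ → ℝ≥0∞ := fun i x => ENNReal.ofReal (Real.exp (r * matOpNorm (B i) * |x|))
  have hφ : ∀ i, Measurable (φ i) := fun i => by fun_prop
  have hpointwise (ω : Ω) :
      ENNReal.ofReal (matOpNorm (NormedSpace.exp ((τ : ℝ) • C + ∑ i, Z i ω • B i)) ^ r) ≤
        ENNReal.ofReal (Real.exp (r * matOpNorm C * τ)) * ∏ i, φ i (Z i ω) := by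
    rw [← ENNReal.ofReal_prod_of_nonneg fun i _ => (Real.exp_pos _).le,
      ← ENNReal.ofReal_mul (Real.exp_pos _).le]
    refine ENNReal.ofReal_le_ofReal ?_
    simpa using matOpNorm_exp_smul_add_sum_smul_rpow_le Finset.univ (by linarith) (τ : ℝ) C
      (fun i => Z i ω) B
  calc _ ≤ ∫⁻ ω, ENNReal.ofReal (Real.exp (r * matOpNorm C * τ)) * ∏ i, φ i (Z i ω) ∂P :=
        lintegral_mono hpointwise
    _ = ENNReal.ofReal (Real.exp (r * matOpNorm C * τ)) * ∏ i, ∫⁻ ω, φ i (Z i ω) ∂P := by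
        rw [lintegral_const_mul _ (by fun_prop)]
        exact congrArg _ (lintegral_prod_eq_prod_lintegral_of_indepFun _ _ (hindep.comp φ hφ)
          fun i => (hφ i).comp (hZmeas i))
    _ ≤ ENNReal.ofReal (Real.exp (r * matOpNorm C * τ)) *
          ∏ i, ENNReal.ofReal (2 * Real.exp (τ * (r * matOpNorm (B i)) ^ 2 / 2)) := by
        gcongr with i
        exact lintegral_exp_mul_abs_le_of_map_eq_gaussianReal (hZlaw i) _
    _ = _ := by
        rw [← ENNReal.ofReal_prod_of_nonneg fun i _ => by positivity,
          ← ENNReal.ofReal_mul (Real.exp_pos _).le, Finset.prod_mul_distrib, ← Real.exp_sum,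
          Finset.prod_const, Finset.card_univ, Fintype.card_fin, mul_left_comm, ← Real.exp_add,
          Finset.mul_sum]
        congr 4
        exact Finset.sum_congr rfl fun i _ => by ring

/-- finiteness (with an explicit bound) of operator-norm moments of the
geometric-Brownian-motion factor. -/
theorem gbm_factor_opNorm_moment_bound (d m : ℕ)
    (A : Matrix (Fin d) (Fin d) ℝ) (B : Fin m → Matrix (Fin d) (Fin d) ℝ)
    (C : Matrix (Fin d) (Fin d) ℝ) (hC : C = A - (1 / 2 : ℝ) • ∑ i, B i ^ 2)
    (r : ℝ) (hr : 1 ≤ r) (τ : ℝ≥0)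
    (Ω : Type) [MeasurableSpace Ω] (P : Measure Ω) [IsProbabilityMeasure P]
    (Z : Fin m → Ω → ℝ) (hZmeas : ∀ i, Measurable (Z i))
    (hZlaw : ∀ i, P.map (Z i) = gaussianReal 0 τ)
    (hindep : iIndepFun Z P) :
    ∫⁻ ω, ENNReal.ofReal
        (matOpNorm (NormedSpace.exp ((τ : ℝ) • C + ∑ i, Z i ω • B i)) ^ r) ∂P
      ≤ ENNReal.ofReal (2 ^ m *
          Real.exp (r * matOpNorm C * τ + (r ^ 2 * τ / 2) * ∑ i, matOpNorm (B i) ^ 2)) :=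
  gbm_factor_opNorm_moment_bound_general d m B C r hr τ Ω P Z hZmeas hZlaw hindep
end
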